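/- Let R be an associative ring with identity and n ≥ 3 an integer. Then the elementary group E_n(R) is generated by the set {e_{i,i+1}(r) : 1 ≤ i ≤ n−1, r ∈ R} ∪ {e_{n,1}(r) : r ∈ R}, i.e., by the elementary matrices along the superdiagonal together with those in position (n,1). -/

import Mathlib

open Matrix

namespace Paper

/-! ### Generalities -/

lemma one_add_mul_aux {M : Type*} [Ring M] {x y : M} (h1 : x + y = 0) (h2 : x * y = 0) :
    (1 + x) * (1 + y) = 1 := by
  have h : (1 + x) * (1 + y) = 1 + (x + y) + x * y := by noncomm_ring
  rw [h, h1, h2, add_zero, add_zero]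

/-- The group of self-homeomorphisms of a topological space, under composition. -/
instance homeomorphGroup (X : Type*) [TopologicalSpace X] : Group (X ≃ₜ X) where
  mul a b := b.trans a
  one := Homeomorph.refl X
  inv := Homeomorph.symm
  mul_assoc a b c := rfl
  one_mul a := Homeomorph.ext fun x => rfl
  mul_one a := Homeomorph.ext fun x => rfl
  inv_mul_cancel a := Homeomorph.ext fun x => a.symm_apply_apply x

section Elementary

variable (R : Type*) [Ring R]

lemma stdBasis_cancel (n : ℕ) (i j : Fin n) (a : R) :
    single i j a + single i j (-a) = 0 := by
  rw [← Matrix.single_add, add_neg_cancel, Matrix.single_zero]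

/-- The elementary matrix `e_{ij}(r) = 1 + r·E_{ij}` as an invertible matrix,
i.e. an element of `GL_n(R)`. -/
def elemGL (n : ℕ) (i j : Fin n) (hij : i ≠ j) (r : R) : (Matrix (Fin n) (Fin n) R)ˣ where
  val := 1 + single i j r
  inv := 1 + single i j (-r)
  val_inv := one_add_mul_aux (stdBasis_cancel R n i j r)
    (Matrix.single_mul_single_of_ne r i j _ (Ne.symm hij) (-r))
  inv_val := one_add_mul_aux
    (by have := stdBasis_cancel R n i j (-r); rwa [neg_neg] at this)
    (Matrix.single_mul_single_of_ne (-r) i j _ (Ne.symm hij) r)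

/-- The elementary group `E_n(R)`: the subgroup of `GL_n(R)` generated by all
elementary matrices. -/
def ElementaryGroup (n : ℕ) : Subgroup (Matrix (Fin n) (Fin n) R)ˣ :=
  Subgroup.closure { A | ∃ (i j : Fin n) (hij : i ≠ j) (r : R), A = elemGL R n i j hij r }

lemma elemGL_mem (n : ℕ) (i j : Fin n) (hij : i ≠ j) (r : R) :
    elemGL R n i j hij r ∈ ElementaryGroup R n :=
  Subgroup.subset_closure ⟨i, j, hij, r, rfl⟩

/-- The diagonal matrix with `-1` at places `i`, `j` and `1` elsewhere. -/
def negPairDiag (n : ℕ) (i j : Fin n) : Matrix (Fin n) (Fin n) R :=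
  Matrix.diagonal fun k => if k = i ∨ k = j then -1 else 1

lemma negPairDiag_mul_self (n : ℕ) (i j : Fin n) :
    negPairDiag R n i j * negPairDiag R n i j = 1 := by
  rw [negPairDiag, Matrix.diagonal_mul_diagonal]
  have h : (fun k => (if k = i ∨ k = j then (-1 : R) else 1) *
      (if k = i ∨ k = j then (-1 : R) else 1)) = fun _ => (1 : R) := by
    funext k
    by_cases h : k = i ∨ k = j <;> simp [h]
  rw [h, Matrix.diagonal_one]

/-- The matrix `negPairDiag` as an invertible matrix. -/
def negPairGL (n : ℕ) (i j : Fin n) : (Matrix (Fin n) (Fin n) R)ˣ :=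
  ⟨negPairDiag R n i j, negPairDiag R n i j,
    negPairDiag_mul_self R n i j, negPairDiag_mul_self R n i j⟩

/-- The matrix `A_{i,i+1}` (0-indexed: diagonal entries `i` and `i+1` equal `-1`). -/
def APair (n : ℕ) (i : Fin (n - 1)) : (Matrix (Fin n) (Fin n) R)ˣ :=
  negPairGL R n ⟨(i : ℕ), by have := i.isLt; omega⟩ ⟨(i : ℕ) + 1, by have := i.isLt; omega⟩

/-- `E_n(R, 2R)`: the smallest normal subgroup of `E_n(R)` containing all elementary
matrices `e_{ij}(s)` with `s ∈ 2R`. -/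
def RelElementaryGroup (n : ℕ) : Subgroup ↥(ElementaryGroup R n) :=
  Subgroup.normalClosure
    { x : ↥(ElementaryGroup R n) | ∃ (i j : Fin n) (hij : i ≠ j) (r : R),
        x.val = elemGL R n i j hij (2 * r) }

end Elementary

section Symplectic

variable (S : Type*) [CommRing S]

/-- The index involution `σ` on `{0, …, 2n-1}`: `σk = k + n` if `k < n`, else `σk = k - n`. -/
def sigIdx (n : ℕ) (k : Fin (2 * n)) : Fin (2 * n) :=
  if h : (k : ℕ) < n then ⟨(k : ℕ) + n, by omega⟩
  else ⟨(k : ℕ) - n, by have := k.isLt; omega⟩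

lemma sigIdx_ne (n : ℕ) (k : Fin (2 * n)) : sigIdx n k ≠ k := by
  have hk := k.isLt
  unfold sigIdx
  split_ifs with h <;>
    · intro hEq
      have h2 := congrArg Fin.val hEq
      simp only [Fin.val_mk] at h2 -- may need adjusting
      omega

lemma sigIdx_inj (n : ℕ) {k l : Fin (2 * n)} (h : k ≠ l) : sigIdx n k ≠ sigIdx n l := by
  have hk := k.isLt
  have hl := l.isLt
  have hkl : (k : ℕ) ≠ (l : ℕ) := fun hc => h (Fin.ext hc)
  unfold sigIdx
  split_ifs with h1 h2 h2 <;>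
    · intro hEq
      have h3 := congrArg Fin.val hEq
      simp only [Fin.val_mk] at h3
      omega

/-- The symplectic elementary matrix `ρ_{ij}(a)`, as a matrix.  When `j = σi` it is
`1 + a E_{i,σi}`; otherwise it is `1 + a E_{ij} - δ a E_{σj,σi}` where `δ = 1` if `i, j`
are on the same side of `n` and `δ = -1` otherwise. -/
def symElemMat (n : ℕ) (i j : Fin (2 * n)) (a : S) : Matrix (Fin (2 * n)) (Fin (2 * n)) S :=
  if j = sigIdx n i then 1 + single i j a
  else 1 + single i j a -
    single (sigIdx n j) (sigIdx n i)
      ((if ((i : ℕ) < n ↔ (j : ℕ) < n) then 1 else -1) * a)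

lemma symElemMat_mul_neg (n : ℕ) (i j : Fin (2 * n)) (hij : i ≠ j) (a : S) :
    symElemMat S n i j a * symElemMat S n i j (-a) = 1 := by
  unfold symElemMat
  set d : S := if ((i : ℕ) < n ↔ (j : ℕ) < n) then 1 else -1 with hd
  split_ifs with h
  · exact one_add_mul_aux (stdBasis_cancel S _ i j a)
      (Matrix.single_mul_single_of_ne a i j _ (Ne.symm hij) (-a))
  · rw [add_sub_assoc, add_sub_assoc]
    apply one_add_mul_aux
    · have c1 := stdBasis_cancel S _ i j a
      have c2 := stdBasis_cancel S _ (sigIdx n j) (sigIdx n i) (d * a)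
      rw [mul_neg]
      calc single i j a - single (sigIdx n j) (sigIdx n i) (d * a) +
            (single i j (-a) - single (sigIdx n j) (sigIdx n i) (-(d * a)))
          = (single i j a + single i j (-a)) -
            (single (sigIdx n j) (sigIdx n i) (d * a) +
              single (sigIdx n j) (sigIdx n i) (-(d * a))) := by abel
        _ = 0 := by rw [c1, c2, sub_zero]
    · simp only [sub_mul, mul_sub]
      rw [Matrix.single_mul_single_of_ne a i j _ (Ne.symm hij) (-a),
        Matrix.single_mul_single_of_ne a i j _ (Ne.symm (sigIdx_ne n j)) (d * -a),
        Matrix.single_mul_single_of_ne (d * a) (sigIdx n j) (sigIdx n i) _ (sigIdx_ne n i) (-a),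
        Matrix.single_mul_single_of_ne (d * a) (sigIdx n j) (sigIdx n i) _
          (sigIdx_inj n hij) (d * -a)]
      simp

/-- The symplectic elementary matrix `ρ_{ij}(a)` as an invertible matrix. -/
def symElemGL (n : ℕ) (i j : Fin (2 * n)) (hij : i ≠ j) (a : S) :
    (Matrix (Fin (2 * n)) (Fin (2 * n)) S)ˣ where
  val := symElemMat S n i j a
  inv := symElemMat S n i j (-a)
  val_inv := symElemMat_mul_neg S n i j hij a
  inv_val := by have := symElemMat_mul_neg S n i j hij (-a); rwa [neg_neg] at this

/-- The elementary symplectic group `Ep_{2n}(S)`, generated by all symplectic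
elementary matrices. -/
def EpGroup (n : ℕ) : Subgroup (Matrix (Fin (2 * n)) (Fin (2 * n)) S)ˣ :=
  Subgroup.closure
    { A | ∃ (i j : Fin (2 * n)) (hij : i ≠ j) (a : S), A = symElemGL S n i j hij a }

/-- The matrix `J = [[0, I_n], [-I_n, 0]]` of the standard symplectic form. -/
def Jmat (n : ℕ) : Matrix (Fin (2 * n)) (Fin (2 * n)) S :=
  Matrix.of fun i j =>
    if (i : ℕ) + n = (j : ℕ) then 1 else if (j : ℕ) + n = (i : ℕ) then -1 else 0

/-- The symplectic group `Sp_{2n}(S)`: invertible `2n × 2n` matrices `M` with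
`Mᵀ * J * M = J`. -/
def SpGroup (n : ℕ) : Subgroup (Matrix (Fin (2 * n)) (Fin (2 * n)) S)ˣ where
  carrier := { M | (↑M : Matrix (Fin (2 * n)) (Fin (2 * n)) S)ᵀ * Jmat S n * ↑M = Jmat S n }
  one_mem' := by simp
  mul_mem' := by
    intro a b ha hb
    show (Units.val (a * b))ᵀ * Jmat S n * Units.val (a * b) = Jmat S n
    rw [Units.val_mul, Matrix.transpose_mul]
    calc (↑b : Matrix (Fin (2*n)) (Fin (2*n)) S)ᵀ * (↑a : Matrix (Fin (2*n)) (Fin (2*n)) S)ᵀ *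
          Jmat S n * (↑a * ↑b)
        = (↑b : Matrix (Fin (2*n)) (Fin (2*n)) S)ᵀ *
            ((↑a : Matrix (Fin (2*n)) (Fin (2*n)) S)ᵀ * Jmat S n * ↑a) * ↑b := by
          noncomm_ring
      _ = (↑b : Matrix (Fin (2*n)) (Fin (2*n)) S)ᵀ * Jmat S n * ↑b := by rw [ha]
      _ = Jmat S n := hb
  inv_mem' := by
    intro a ha
    have ha' : (↑a : Matrix (Fin (2 * n)) (Fin (2 * n)) S)ᵀ * Jmat S n *
        (↑a : Matrix (Fin (2 * n)) (Fin (2 * n)) S) = Jmat S n := ha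
    show ((a⁻¹ : (Matrix (Fin (2 * n)) (Fin (2 * n)) S)ˣ) :
        Matrix (Fin (2 * n)) (Fin (2 * n)) S)ᵀ * Jmat S n *
        ((a⁻¹ : (Matrix (Fin (2 * n)) (Fin (2 * n)) S)ˣ) :
        Matrix (Fin (2 * n)) (Fin (2 * n)) S) = Jmat S n
    set A : Matrix (Fin (2 * n)) (Fin (2 * n)) S := ↑a with hA
    set B : Matrix (Fin (2 * n)) (Fin (2 * n)) S := ((a⁻¹ :
        (Matrix (Fin (2 * n)) (Fin (2 * n)) S)ˣ) : Matrix (Fin (2 * n)) (Fin (2 * n)) S) with hB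
    have h1 : A * B = 1 := a.mul_inv
    calc Bᵀ * Jmat S n * B
        = Bᵀ * (Aᵀ * Jmat S n * A) * B := by rw [ha']
      _ = (A * B)ᵀ * Jmat S n * (A * B) := by rw [Matrix.transpose_mul]; noncomm_ring
      _ = Jmat S n := by rw [h1]; simp

end Symplectic

section Extra

variable (R : Type*) [Ring R]

/-- Index of the `(2i-1)`-th row (1-indexed), i.e. `2i` 0-indexed. -/
def bIdx0 (k : ℕ) (i : Fin k) : Fin (2 * k) := ⟨2 * (i : ℕ), by have := i.isLt; omega⟩

def bIdx1 (k : ℕ) (i : Fin k) : Fin (2 * k) := ⟨2 * (i : ℕ) + 1, by have := i.isLt; omega⟩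

lemma bIdx_ne (k : ℕ) (i : Fin k) : bIdx0 k i ≠ bIdx1 k i := by
  simp only [bIdx0, bIdx1, ne_eq, Fin.mk.injEq]
  omega

/-- The matrix `B_i = e_{2i-1,2i}(1) e_{2i,2i-1}(-1) e_{2i-1,2i}(1) e_{2i,2i-1}(-1)`
(1-indexed) in `E_{2k}(R)`. -/
def Bmat (k : ℕ) (i : Fin k) : (Matrix (Fin (2 * k)) (Fin (2 * k)) R)ˣ :=
  elemGL R (2 * k) (bIdx0 k i) (bIdx1 k i) (bIdx_ne k i) 1 *
  elemGL R (2 * k) (bIdx1 k i) (bIdx0 k i) (bIdx_ne k i).symm (-1) *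
  elemGL R (2 * k) (bIdx0 k i) (bIdx1 k i) (bIdx_ne k i) 1 *
  elemGL R (2 * k) (bIdx1 k i) (bIdx0 k i) (bIdx_ne k i).symm (-1)

end Extra

section SymplecticExtra

variable (S : Type*) [CommRing S]

def cIdx0 (n : ℕ) (i : Fin n) : Fin (2 * n) := ⟨(i : ℕ), by have := i.isLt; omega⟩

def cIdx1 (n : ℕ) (i : Fin n) : Fin (2 * n) := ⟨n + (i : ℕ), by have := i.isLt; omega⟩

lemma cIdx_ne (n : ℕ) (i : Fin n) : cIdx0 n i ≠ cIdx1 n i := by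
  have := i.pos
  simp only [cIdx0, cIdx1, ne_eq, Fin.mk.injEq]
  omega

/-- The matrix `C_i = ρ_{i,n+i}(1) ρ_{n+i,i}(-1) ρ_{i,n+i}(1) ρ_{n+i,i}(-1)` in
`Sp_{2n}(S)`. -/
def Cmat (n : ℕ) (i : Fin n) : (Matrix (Fin (2 * n)) (Fin (2 * n)) S)ˣ :=
  symElemGL S n (cIdx0 n i) (cIdx1 n i) (cIdx_ne n i) 1 *
  symElemGL S n (cIdx1 n i) (cIdx0 n i) (cIdx_ne n i).symm (-1) *
  symElemGL S n (cIdx0 n i) (cIdx1 n i) (cIdx_ne n i) 1 *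
  symElemGL S n (cIdx1 n i) (cIdx0 n i) (cIdx_ne n i).symm (-1)

/-- The equivalence `Fin n ⊕ Fin n ≃ Fin (2 * n)`. -/
def finDouble (n : ℕ) : Fin n ⊕ Fin n ≃ Fin (2 * n) :=
  finSumFinEquiv.trans (finCongr (two_mul n).symm)

/-- The block-diagonal matrix `diag(A, B)` as a `2n × 2n` matrix. -/
def blockDiag2 (n : ℕ) (A B : Matrix (Fin n) (Fin n) S) :
    Matrix (Fin (2 * n)) (Fin (2 * n)) S :=
  Matrix.reindex (finDouble n) (finDouble n) (Matrix.fromBlocks A 0 0 B)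

lemma blockDiag2_mul (n : ℕ) (A B A' B' : Matrix (Fin n) (Fin n) S) :
    blockDiag2 S n A B * blockDiag2 S n A' B' = blockDiag2 S n (A * A') (B * B') := by
  unfold blockDiag2
  rw [Matrix.reindex_apply, Matrix.reindex_apply, Matrix.reindex_apply,
    Matrix.submatrix_mul_equiv, Matrix.fromBlocks_multiply]
  simp

lemma blockDiag2_one (n : ℕ) : blockDiag2 S n 1 1 = 1 := by
  unfold blockDiag2
  rw [Matrix.reindex_apply, Matrix.fromBlocks_one, Matrix.submatrix_one_equiv]

/-- The hyperbolic embedding `A ↦ diag(A, (Aᵀ)⁻¹) = diag(A, (A⁻¹)ᵀ)` from `GL_n(S)`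
to `GL_{2n}(S)`. -/
def hypGL (n : ℕ) (A : (Matrix (Fin n) (Fin n) S)ˣ) :
    (Matrix (Fin (2 * n)) (Fin (2 * n)) S)ˣ where
  val := blockDiag2 S n ↑A ((↑(A⁻¹) : Matrix (Fin n) (Fin n) S)ᵀ)
  inv := blockDiag2 S n ↑(A⁻¹) ((↑A : Matrix (Fin n) (Fin n) S)ᵀ)
  val_inv := by
    rw [blockDiag2_mul, ← Matrix.transpose_mul, A.mul_inv, Matrix.transpose_one,
      blockDiag2_one]
  inv_val := by
    rw [blockDiag2_mul, ← Matrix.transpose_mul, A.inv_mul, Matrix.transpose_one,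
      blockDiag2_one]

end SymplecticExtra

/-! For distinct `i, m, j` the commutator of `e_{im}(r)` and `e_{mj}(s)` is `e_{ij}(rs)`. Going
from `i` to `j` through the cyclic successor `m = i + 1 mod n`, induction on the cyclic distance
from `i` to `j` writes every `e_{ij}(r)` in terms of the elementary matrices `e_{i,i+1 mod n}`. -/

lemma Nat.add_one_mod_eq_iff {i j n : ℕ} (hi : i < n) (hj : j < n) :
    (i + 1) % n = j ↔ j = i + 1 ∨ i = n - 1 ∧ j = 0 := by
  rcases Nat.lt_or_ge (i + 1) n with hlt | hge
  · rw [Nat.mod_eq_of_lt hlt]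
    omega
  · rw [show i + 1 = n by omega, Nat.mod_self]
    omega

section CyclicGeneration

open scoped commutatorElement

variable (R : Type*) [Ring R] {n : ℕ}

lemma elemGL_inv (i j : Fin n) (hij : i ≠ j) (r : R) :
    (elemGL R n i j hij r)⁻¹ = elemGL R n i j hij (-r) :=
  Units.ext rfl

lemma elemGL_mul_eq_commutator {i m j : Fin n} (him : i ≠ m) (hmj : m ≠ j) (hij : i ≠ j)
    (r s : R) :
    elemGL R n i j hij (r * s) = ⁅elemGL R n i m him r, elemGL R n m j hmj s⁆ := by
  rw [commutatorElement_def, elemGL_inv, elemGL_inv]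
  apply Units.ext
  show 1 + single i j (r * s) =
    (1 + single i m r) * (1 + single m j s) * (1 + single i m (-r)) * (1 + single m j (-s))
  simp only [mul_add, add_mul, mul_one, one_mul, ← single_neg, mul_neg, neg_mul,
    single_mul_single_same, single_mul_single_of_ne _ _ _ _ him.symm,
    single_mul_single_of_ne _ _ _ _ hmj.symm, single_mul_single_of_ne _ _ _ _ hij.symm,
    add_zero]
  abel

variable (n) in
def cyclicElemGenerators : Set (Matrix (Fin n) (Fin n) R)ˣ :=
  { A : (Matrix (Fin n) (Fin n) R)ˣ |
      ∃ (i j : Fin n) (hij : i ≠ j) (r : R), (j : ℕ) = (i : ℕ) + 1 ∧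
        A = elemGL R n i j hij r } ∪
  { A : (Matrix (Fin n) (Fin n) R)ˣ |
      ∃ (i j : Fin n) (hij : i ≠ j) (r : R), (i : ℕ) = n - 1 ∧ (j : ℕ) = 0 ∧
        A = elemGL R n i j hij r }

lemma elemGL_mem_cyclicElemGenerators {i j : Fin n} (hij : i ≠ j) (r : R)
    (hsucc : ((i : ℕ) + 1) % n = j) :
    elemGL R n i j hij r ∈ cyclicElemGenerators R n := by
  rcases (Nat.add_one_mod_eq_iff i.isLt j.isLt).mp hsucc with h | ⟨hi, hj⟩
  · exact Or.inl ⟨i, j, hij, r, h, rfl⟩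
  · exact Or.inr ⟨i, j, hij, r, hi, hj, rfl⟩

lemma elemGL_mem_closure_cyclicElemGenerators_of_add_mod (d : ℕ) :
    ∀ {i j : Fin n} (hij : i ≠ j) (r : R), ((i : ℕ) + d) % n = j →
      elemGL R n i j hij r ∈ Subgroup.closure (cyclicElemGenerators R n) := by
  induction d with
  | zero =>
    intro i j hij r hd
    rw [add_zero, Nat.mod_eq_of_lt i.isLt] at hd
    exact absurd (Fin.ext hd) hij
  | succ d ih =>
    intro i j hij r hd
    let m : Fin n := ⟨((i : ℕ) + 1) % n, Nat.mod_lt _ i.pos⟩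
    by_cases hmj : m = j
    · exact Subgroup.subset_closure
        (elemGL_mem_cyclicElemGenerators R hij r (congrArg Fin.val hmj))
    have him : i ≠ m := by
      intro him
      have hn : n = 1 := by
        have := (Nat.add_one_mod_eq_iff i.isLt i.isLt).mp (congrArg Fin.val him).symm
        omega
      subst hn
      exact hij (Subsingleton.elim i j)
    have hmd : ((m : ℕ) + d) % n = j := by
      rw [← hd, Nat.add_mod, Nat.mod_mod, ← Nat.add_mod, add_assoc, add_comm 1 d]
    have him_mem := Subgroup.subset_closure (elemGL_mem_cyclicElemGenerators R him r rfl)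
    have hmj_mem := ih hmj 1 hmd
    rw [← mul_one r, elemGL_mul_eq_commutator R him hmj hij, commutatorElement_def]
    exact mul_mem (mul_mem (mul_mem him_mem hmj_mem) (inv_mem him_mem)) (inv_mem hmj_mem)

lemma closure_cyclicElemGenerators :
    Subgroup.closure (cyclicElemGenerators R n) = ElementaryGroup R n := by
  apply le_antisymm
  · rw [Subgroup.closure_le]
    rintro A (⟨i, j, hij, r, -, rfl⟩ | ⟨i, j, hij, r, -, -, rfl⟩) <;> exact elemGL_mem R n i j hij r
  · rw [ElementaryGroup, Subgroup.closure_le]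
    rintro A ⟨i, j, hij, r, rfl⟩
    refine elemGL_mem_closure_cyclicElemGenerators_of_add_mod R ((j : ℕ) + n - i) hij r ?_
    rw [Nat.add_sub_cancel' (by omega), Nat.add_mod_right, Nat.mod_eq_of_lt j.isLt]

end CyclicGeneration

theorem statement6_general (R : Type*) [Ring R] (n : ℕ) :
    Subgroup.closure
      ({ A : (Matrix (Fin n) (Fin n) R)ˣ |
          ∃ (i j : Fin n) (hij : i ≠ j) (r : R), (j : ℕ) = (i : ℕ) + 1 ∧
            A = elemGL R n i j hij r } ∪
       { A : (Matrix (Fin n) (Fin n) R)ˣ |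
          ∃ (i j : Fin n) (hij : i ≠ j) (r : R), (i : ℕ) = n - 1 ∧ (j : ℕ) = 0 ∧
            A = elemGL R n i j hij r }) = ElementaryGroup R n :=
  closure_cyclicElemGenerators R

/-- For `n ≥ 3`, `E_n(R)` is generated by the superdiagonal elementary
matrices `e_{i,i+1}(r)` together with the elementary matrices `e_{n,1}(r)` (1-indexed;
0-indexed these are positions `(n-1, 0)`). -/
theorem statement6 (R : Type*) [Ring R] (n : ℕ) (hn : 3 ≤ n) :
    Subgroup.closure
      ({ A : (Matrix (Fin n) (Fin n) R)ˣ |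
          ∃ (i j : Fin n) (hij : i ≠ j) (r : R), (j : ℕ) = (i : ℕ) + 1 ∧
            A = elemGL R n i j hij r } ∪
       { A : (Matrix (Fin n) (Fin n) R)ˣ |
          ∃ (i j : Fin n) (hij : i ≠ j) (r : R), (i : ℕ) = n - 1 ∧ (j : ℕ) = 0 ∧
            A = elemGL R n i j hij r }) = ElementaryGroup R n :=
  statement6_general R n

end Paper
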